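/- Every linear path-based tree support (T, 𝒫) admits a planar straight-line drawing in which every path of 𝒫 has 0 bends; that is, the planar curve complexity of a linear path-based tree support is 0. -/

import Mathlib

open Classical

noncomputable section

/-- The plane. -/
abbrev Point : Type := ℝ × ℝ

/-- A straight-line drawing `f` of a simple graph `G` is *proper* if it is injective,
the segments of any two distinct edges sharing a vertex `v` intersect exactly in `f v`,
and no vertex other than the endpoints lies on the segment of an edge. -/
def IsProperDrawing {V : Type*} (G : SimpleGraph V) (f : V → Point) : Prop :=
  Function.Injective f ∧
  (∀ u v w : V, G.Adj u v → G.Adj v w → u ≠ w →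
    segment ℝ (f u) (f v) ∩ segment ℝ (f v) (f w) = {f v}) ∧
  (∀ u v x : V, G.Adj u v → x ≠ u → x ≠ v → f x ∉ segment ℝ (f u) (f v))

/-- A *planar* straight-line drawing: proper, and segments of edges with no
common endpoint are disjoint. -/
def IsPlanarDrawing {V : Type*} (G : SimpleGraph V) (f : V → Point) : Prop :=
  IsProperDrawing G f ∧
  ∀ u v w x : V, G.Adj u v → G.Adj w x → u ≠ w → u ≠ x → v ≠ w → v ≠ x →
    segment ℝ (f u) (f v) ∩ segment ℝ (f w) (f x) = ∅

/-- Number of bends of a path (given by its list of vertices) in the drawing `f`: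
a bend at each internal vertex `b` (consecutive triple `a, b, c`) such that
`f b` is not strictly between `f a` and `f c`. -/
def numBends {V : Type*} (f : V → Point) : List V → ℕ
  | a :: b :: c :: rest =>
    (if f b ∈ openSegment ℝ (f a) (f c) then 0 else 1) + numBends f (b :: c :: rest)
  | _ => 0

/-- The edges of a path given by its list of vertices. -/
def edgesOfList {V : Type*} : List V → List (Sym2 V)
  | a :: b :: rest => s(a, b) :: edgesOfList (b :: rest)
  | _ => []

/-- A list of vertices represents a simple path of `G`. -/
def IsPathList {V : Type*} (G : SimpleGraph V) (l : List V) : Prop :=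
  l.Chain' G.Adj ∧ l.Nodup

/-- A path-based support: a set of simple paths of `G` covering all edges of `G`. -/
def IsPathBasedSupport {V : Type*} (G : SimpleGraph V) (P : Finset (List V)) : Prop :=
  (∀ l ∈ P, IsPathList G l) ∧ ∀ e ∈ G.edgeSet, ∃ l ∈ P, e ∈ edgesOfList l

/-- A path-based support is *linear* if two distinct paths share at most one vertex. -/
def IsLinear {V : Type*} (P : Finset (List V)) : Prop :=
  ∀ l₁ ∈ P, ∀ l₂ ∈ P, l₁ ≠ l₂ →
    ∀ u v : V, u ∈ l₁ → u ∈ l₂ → v ∈ l₁ → v ∈ l₂ → u = v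

/-- An *alignment* of `G`: a symmetric relation pairing distinct incident edges of `G`,
such that at every vertex each incident edge is paired with at most one
other edge incident to that vertex. -/
structure IsAlignment {V : Type*} (G : SimpleGraph V) (A : Sym2 V → Sym2 V → Prop) : Prop where
  symm : ∀ e e', A e e' → A e' e
  mem_edges : ∀ e e', A e e' → e ∈ G.edgeSet ∧ e' ∈ G.edgeSet
  ne : ∀ e e', A e e' → e ≠ e'
  share : ∀ e e', A e e' → ∃ v : V, v ∈ e ∧ v ∈ e'
  uniq : ∀ (v : V) (e e₁ e₂ : Sym2 V), v ∈ e → v ∈ e₁ → v ∈ e₂ →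
    A e e₁ → A e e₂ → e₁ = e₂

/-- Number of bends of a path with respect to an alignment `A`:
a bend at each internal vertex whose two incident path edges are not paired in `A`. -/
def numBendsA {V : Type*} (A : Sym2 V → Sym2 V → Prop) : List V → ℕ
  | a :: b :: c :: rest =>
    (if A s(a, b) s(b, c) then 0 else 1) + numBendsA A (b :: c :: rest)
  | _ => 0

/-- A cactus: a connected graph in which every edge lies on at most one cycle,
i.e. two cycles sharing an edge have the same edge set. -/
def IsCactus {V : Type*} (G : SimpleGraph V) : Prop :=
  G.Connected ∧ ∀ (v w : V) (c : G.Walk v v) (c' : G.Walk w w),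
    c.IsCycle → c'.IsCycle → (∃ e, e ∈ c.edges ∧ e ∈ c'.edges) →
    ∀ e, e ∈ c.edges ↔ e ∈ c'.edges

end


section Infra

open List SimpleGraph Classical

section ListLemmas

variable {α : Type*}

lemma prefix_pair {a b x y : α} {t : List α} (h : [a,b] <+: x :: y :: t) : a = x ∧ b = y := by
  obtain ⟨r, hr⟩ := h
  simp at hr
  exact ⟨hr.1, hr.2.1⟩

lemma not_infix_triple_head {t : List α} {a b c : α} (hn : (b :: t).Nodup) :
    ¬ ([a,b,c] <:+: b :: t) := by
  rintro ⟨s₁, s₂, hs⟩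
  rcases s₁ with _ | ⟨x, s⟩
  · simp only [List.nil_append, List.cons_append, List.cons.injEq] at hs
    obtain ⟨rfl, hs2⟩ := hs
    exact (List.nodup_cons.mp hn).1 (by rw [← hs2]; simp)
  · simp only [List.cons_append, List.cons.injEq] at hs
    obtain ⟨rfl, hs2⟩ := hs
    exact (List.nodup_cons.mp hn).1 (by rw [← hs2]; simp)

lemma infix_triple_unique {a b c a' c' : α} :
    ∀ {l : List α}, l.Nodup → [a,b,c] <:+: l → [a',b,c'] <:+: l → a = a' ∧ c = c'
  | [], _, h, _ => by
      have := h.sublist.length_le; simp at this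
  | x :: t, hn, h1, h2 => by
      rcases List.infix_cons_iff.mp h1 with hp1 | hi1 <;>
        rcases List.infix_cons_iff.mp h2 with hp2 | hi2
      · obtain ⟨r, hr⟩ := hp1
        obtain ⟨r', hr'⟩ := hp2
        rw [← hr'] at hr
        simp only [List.cons_append, List.nil_append, List.cons.injEq] at hr
        obtain ⟨e1, e2, e3, e4⟩ := hr
        exact ⟨e1, e3⟩
      · obtain ⟨r, hr⟩ := hp1
        simp only [List.cons_append, List.nil_append, List.cons.injEq] at hr
        obtain ⟨rfl, ht⟩ := hr
        rw [← ht] at hi2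
        have hnt : (b :: c :: r).Nodup := by
          have := (List.nodup_cons.mp hn).2; rw [← ht] at this; exact this
        exact absurd hi2 (not_infix_triple_head hnt)
      · obtain ⟨r, hr⟩ := hp2
        simp only [List.cons_append, List.nil_append, List.cons.injEq] at hr
        obtain ⟨rfl, ht⟩ := hr
        rw [← ht] at hi1
        have hnt : (b :: c' :: r).Nodup := by
          have := (List.nodup_cons.mp hn).2; rw [← ht] at this; exact this
        exact absurd hi1 (not_infix_triple_head hnt)
      · exact infix_triple_unique (List.nodup_cons.mp hn).2 hi1 hi2

lemma infix_reverse_triple {a b c : α} {l : List α} :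
    [a,b,c] <:+: l.reverse ↔ [c,b,a] <:+: l := by
  have e : ([c,b,a] : List α).reverse = [a,b,c] := by simp
  have e2 : ([a,b,c] : List α).reverse = [c,b,a] := by simp
  constructor
  · intro h
    have h2 := List.reverse_infix.mpr h
    rw [e2, List.reverse_reverse] at h2
    exact h2
  · intro h
    have h2 := List.reverse_infix.mpr h
    rw [e] at h2
    exact h2

lemma mem_end_or_internal {u : α} :
    ∀ {l : List α}, u ∈ l →
      (∃ t, l = u :: t) ∨ (∃ t, l = t ++ [u]) ∨ (∃ a b, [a,u,b] <:+: l)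
  | [], h => absurd h List.not_mem_nil
  | x :: t, h => by
      rcases List.mem_cons.mp h with rfl | ht
      · rcases t with _ | ⟨y, r⟩
        · exact Or.inr (Or.inl ⟨[], rfl⟩)
        · exact Or.inl ⟨y :: r, rfl⟩
      · rcases mem_end_or_internal ht with ⟨t', rfl⟩ | ⟨t', rfl⟩ | ⟨a, b, hab⟩
        · rcases t' with _ | ⟨y, r⟩
          · exact Or.inr (Or.inl ⟨[x], rfl⟩)
          · exact Or.inr (Or.inr ⟨x, y, ⟨[], r, rfl⟩⟩)
        · exact Or.inr (Or.inl ⟨x :: t', rfl⟩)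
        · exact Or.inr (Or.inr ⟨a, b, hab.trans (List.suffix_cons x _).isInfix⟩)

lemma filter_of_head {u : α} {t : List α} (h : u ∉ t) :
    (u :: t).filter (fun x => decide (x ≠ u)) = t := by
  rw [List.filter_cons_of_neg (by simp)]
  exact List.filter_eq_self.mpr fun a ha => by
    simp only [ne_eq, decide_eq_true_eq]
    rintro rfl; exact h ha

lemma filter_of_last {u : α} {t : List α} (h : u ∉ t) :
    (t ++ [u]).filter (fun x => decide (x ≠ u)) = t := by
  rw [List.filter_append, List.filter_cons_of_neg (by simp), List.filter_nil,
    List.append_nil]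
  exact List.filter_eq_self.mpr fun a ha => by
    simp only [ne_eq, decide_eq_true_eq]
    rintro rfl; exact h ha

lemma infix_cons_of_ne {l : List α} {a u : α} {m : List α} (hne : a ≠ u)
    (h : (a :: m) <:+: u :: l) : (a :: m) <:+: l := by
  rcases List.infix_cons_iff.mp h with hp | hi
  · obtain ⟨r, hr⟩ := hp
    simp only [List.cons_append] at hr
    exact absurd (List.cons.injEq _ _ _ _ ▸ hr).1 hne
  · exact hi

lemma infix_append_singleton_of_ne {l : List α} {u a : α} {m : List α}
    (hne : a ≠ u) (h : (m ++ [a]) <:+: l ++ [u]) : (m ++ [a]) <:+: l := by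
  have h2 := List.reverse_infix.mpr h
  simp only [List.reverse_append, List.reverse_cons, List.reverse_nil, List.nil_append,
    List.cons_append, List.singleton_append] at h2
  have h3 := infix_cons_of_ne hne h2
  have h4 : (m ++ [a]).reverse <:+: l.reverse := by
    simpa using h3
  exact List.reverse_infix.mp h4

end ListLemmas


section Geom
variable {p a b q : Point}

lemma seg_mem_iff : a ∈ segment ℝ p q ↔ ∃ t : ℝ, t ∈ Set.Icc (0:ℝ) 1 ∧ a = p + t • (q - p) := by
  rw [segment_eq_image']
  constructor
  · rintro ⟨t, ht, rfl⟩; exact ⟨t, ht, rfl⟩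
  · rintro ⟨t, ht, rfl⟩; exact ⟨t, ht, rfl⟩

/-- Two segments emanating from `p` in non-positively-parallel directions meet only at `p`. -/
lemma ray_inter (ha : a ≠ p)
    (hdir : ∀ s : ℝ, 0 < s → b - p ≠ s • (a - p)) :
    segment ℝ p a ∩ segment ℝ p b = {p} := by
  apply Set.eq_singleton_iff_unique_mem.mpr
  refine ⟨⟨left_mem_segment ℝ p a, left_mem_segment ℝ p b⟩, ?_⟩
  rintro x ⟨hxa, hxb⟩
  obtain ⟨s, hs, rfl⟩ := seg_mem_iff.mp hxa
  obtain ⟨t, ht, he⟩ := seg_mem_iff.mp hxb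
  rcases eq_or_lt_of_le hs.1 with h0 | h0
  · rw [← h0]; simp
  rcases eq_or_lt_of_le ht.1 with h0' | h0'
  · exfalso
    rw [← h0'] at he; simp at he
    rcases he with h | h
    · exact absurd h (ne_of_gt h0)
    · exact ha (by rwa [sub_eq_zero] at h)
  · exfalso
    have he' : t • (b - p) = s • (a - p) := by
      have : p + s • (a - p) - p = p + t • (b - p) - p := by rw [he]
      simpa using this.symm
    have : b - p = (s / t) • (a - p) := by
      rw [div_eq_inv_mul, mul_smul, ← he', inv_smul_smul₀ (ne_of_gt h0')]
    exact hdir (s / t) (div_pos h0 h0') this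

/-- If `b` is on the same open ray from `p` as `a`, the segments `[p,a]`, `[p,b]`
share a point different from `p`. -/
lemma ray_overlap (ha : a ≠ p) {t : ℝ} (ht : 0 < t) (hb : b - p = t • (a - p)) :
    ∃ x, x ∈ segment ℝ p a ∧ x ∈ segment ℝ p b ∧ x ≠ p := by
  have hbp : b ≠ p := by
    intro h
    rw [h, sub_self] at hb
    rcases (smul_eq_zero.mp hb.symm) with h' | h'
    · exact (ne_of_gt ht) h'
    · exact ha (by rwa [sub_eq_zero] at h')
  rcases le_or_gt t 1 with h1 | h1
  · refine ⟨b, ?_, right_mem_segment ℝ p b, hbp⟩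
    exact seg_mem_iff.mpr ⟨t, ⟨le_of_lt ht, h1⟩, by rw [← hb]; abel⟩
  · refine ⟨a, right_mem_segment ℝ p a, ?_, ha⟩
    refine seg_mem_iff.mpr ⟨1 / t, ⟨by positivity, ?_⟩, ?_⟩
    · rw [div_le_one ht]; exact le_of_lt h1
    · rw [hb, smul_smul, one_div, inv_mul_cancel₀ (ne_of_gt ht), one_smul]
      abel

end Geom

section Geom2
variable {p a q : Point}

lemma mid_open_seg (hne : a ≠ p) {ε : ℝ} (hε : 0 < ε) :
    p ∈ openSegment ℝ a (p + ε • (p - a)) := by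
  refine ⟨ε/(1+ε), 1/(1+ε), by positivity, by positivity, by field_simp; ring, ?_⟩
  have h1 : (1:ℝ) + ε ≠ 0 := by positivity
  apply Prod.ext <;>
  · simp only [Prod.smul_def, Prod.add_def, Prod.sub_def, smul_eq_mul]
    field_simp
    ring

lemma open_mid_ray {d : Point} {ε : ℝ} (hε : 0 < ε) (h : p ∈ openSegment ℝ a (p + ε • d)) :
    ∃ c : ℝ, 0 < c ∧ a - p = -c • d := by
  obtain ⟨α, β, hα, hβ, hs, he⟩ := h
  refine ⟨β * ε / α, by positivity, ?_⟩
  have hα0 : α ≠ 0 := ne_of_gt hα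
  have h1 : α * a.1 + β * (p.1 + ε * d.1) = p.1 := by
    have := congrArg Prod.fst he
    simpa [Prod.smul_def, Prod.add_def] using this
  have h2 : α * a.2 + β * (p.2 + ε * d.2) = p.2 := by
    have := congrArg Prod.snd he
    simpa [Prod.smul_def, Prod.add_def] using this
  apply Prod.ext
  · show a.1 - p.1 = -(β * ε / α) * d.1
    field_simp
    linear_combination h1 - p.1 * hs
  · show a.2 - p.2 = -(β * ε / α) * d.2
    field_simp
    linear_combination h2 - p.2 * hs

lemma dist_le_of_seg (h : a ∈ segment ℝ p q) : dist p a ≤ dist p q := by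
  obtain ⟨t, ht, rfl⟩ := seg_mem_iff.mp h
  rw [dist_comm p _, dist_comm p q, dist_eq_norm]
  have : p + t • (q - p) - p = t • (q - p) := by abel
  rw [this, norm_smul, dist_eq_norm]
  calc ‖t‖ * ‖q - p‖ ≤ 1 * ‖q - p‖ := by
        apply mul_le_mul_of_nonneg_right _ (norm_nonneg _)
        rw [Real.norm_eq_abs, abs_le]; exact ⟨by linarith [ht.1], ht.2⟩
    _ = ‖q - p‖ := one_mul _

lemma isClosed_seg (x y : Point) : IsClosed (segment ℝ x y) := by
  rw [segment_eq_image']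
  exact (isCompact_Icc.image (by continuity)).isClosed

lemma exists_free_dir (s : Finset Point) (h0 : (0:Point) ∉ s) :
    ∃ d : Point, d ≠ 0 ∧ ∀ b ∈ s, ∀ t : ℝ, b ≠ t • d := by
  classical
  obtain ⟨y, hy⟩ := Infinite.exists_notMem_finset (s.image (fun b => b.2 / b.1))
  refine ⟨(1, y), by simp [Prod.ext_iff], ?_⟩
  rintro b hb t hbt
  have hb1 : b.1 = t := by rw [hbt]; simp [Prod.smul_def]
  have hb2 : b.2 = t * y := by rw [hbt]; simp [Prod.smul_def]
  rcases eq_or_ne t 0 with rfl | ht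
  · apply h0
    have : b = 0 := by apply Prod.ext <;> simp [hb1, hb2]
    rwa [this] at hb
  · apply hy
    refine Finset.mem_image.mpr ⟨b, hb, ?_⟩
    rw [hb1, hb2]
    field_simp

end Geom2


lemma exists_leaf {V : Type*} [Fintype V] (G : SimpleGraph V) (hA : G.IsAcyclic)
    {a b : V} (hab : G.Adj a b) : ∃ u v : V, G.Adj u v ∧ ∀ w, G.Adj u w → w = v := by
  classical
  set Q : ℕ → Prop := fun n => ∃ (c : V) (p : G.Walk a c), p.IsPath ∧ p.length = n with hQ
  have hQ1 : Q 1 := ⟨b, Walk.cons hab Walk.nil, by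
    rw [Walk.cons_isPath_iff]
    exact ⟨Walk.IsPath.nil, by simp; exact hab.ne⟩, rfl⟩
  have hcard : 1 ≤ Fintype.card V := by
    have : Nonempty V := ⟨a⟩; exact Fintype.card_pos
  set n := Nat.findGreatest Q (Fintype.card V) with hn
  have hn1 : 1 ≤ n := Nat.le_findGreatest hcard hQ1
  obtain ⟨c, p, hp, hlen⟩ : Q n := by
    have := Nat.findGreatest_spec (P := Q) hcard hQ1
    exact this
  have hmax : ∀ (c' : V) (p' : G.Walk a c'), p'.IsPath → p'.length ≤ n := by
    intro c' p' hp'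
    by_contra h
    push_neg at h
    exact Nat.findGreatest_is_greatest h (le_of_lt hp'.length_lt) ⟨c', p', hp', rfl⟩
  have hca : c ≠ a := by
    rintro rfl
    rw [Walk.isPath_iff_eq_nil] at hp
    rw [hp] at hlen
    simp at hlen
    omega
  -- reverse walk
  obtain ⟨d, hcd, r', hr'⟩ := Walk.exists_eq_cons_of_ne hca p.reverse
  have hrev : p.reverse.IsPath := hp.reverse
  rw [hr'] at hrev
  rw [Walk.cons_isPath_iff] at hrev
  obtain ⟨hr'path, hcns⟩ := hrev
  refine ⟨c, d, hcd, ?_⟩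
  intro w hw
  by_contra hwd
  by_cases hmem : w ∈ p.support
  · -- w on the path; build a second path from c to a
    have hw' : w ∈ r'.support := by
      have : w ∈ p.reverse.support := by rwa [Walk.support_reverse, List.mem_reverse]
      rw [hr'] at this
      rcases List.mem_cons.mp (by simpa using this) with h | h
      · exact absurd h hw.ne'
      · exact h
    set q2 : G.Walk c a := Walk.cons hw (r'.dropUntil w hw') with hq2
    have hq2p : q2.IsPath := by
      rw [hq2, Walk.cons_isPath_iff]
      refine ⟨hr'path.dropUntil hw', fun hcmem => hcns (Walk.support_dropUntil_subset _ hw' hcmem)⟩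
    have huniq := hA.path_unique ⟨q2, hq2p⟩ ⟨p.reverse, hp.reverse⟩
    have hsup : q2.support = p.reverse.support := by
      rw [Subtype.ext_iff] at huniq
      simp only at huniq
      rw [huniq]
    rw [hq2, hr'] at hsup
    simp only [Walk.support_cons] at hsup
    have : (r'.dropUntil w hw').support = r'.support := by
      exact (List.cons.injEq _ _ _ _ ▸ hsup).2
    have h1 : (r'.dropUntil w hw').support = w :: (r'.dropUntil w hw').support.tail :=
      Walk.support_eq_cons _
    have h2 : r'.support = d :: r'.support.tail := Walk.support_eq_cons _
    rw [h1, h2] at this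
    exact hwd (List.cons.injEq _ _ _ _ ▸ this).1
  · -- extend the path
    have : (p.concat hw).IsPath := by
      rw [← Walk.isPath_reverse_iff, Walk.reverse_concat, Walk.cons_isPath_iff]
      refine ⟨hp.reverse, ?_⟩
      rwa [Walk.support_reverse, List.mem_reverse]
    have := hmax _ _ this
    rw [Walk.length_concat] at this
    omega


section MoreList
variable {α : Type*} {V : Type*}

lemma edgesOfList_mem_iff {e : Sym2 V} :
    ∀ {l : List V}, e ∈ edgesOfList l ↔ ∃ a b, e = s(a,b) ∧ [a,b] <:+: l
  | [] => by simp [edgesOfList]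
  | [x] => by
      simp only [edgesOfList, List.not_mem_nil, false_iff]
      rintro ⟨a, b, -, h⟩
      have := h.sublist.length_le
      simp at this
  | x :: y :: t => by
      rw [edgesOfList]
      simp only [List.mem_cons]
      constructor
      · rintro (rfl | h)
        · exact ⟨x, y, rfl, ⟨[], t, rfl⟩⟩
        · obtain ⟨a, b, rfl, hab⟩ := edgesOfList_mem_iff.mp h
          exact ⟨a, b, rfl, hab.trans (List.suffix_cons x (y :: t)).isInfix⟩
      · rintro ⟨a, b, rfl, hab⟩
        rcases List.infix_cons_iff.mp hab with hp | hi
        · obtain ⟨rfl, rfl⟩ := prefix_pair hp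
          exact Or.inl rfl
        · exact Or.inr (edgesOfList_mem_iff.mpr ⟨a, b, rfl, hi⟩)

lemma endpoints_mem {x y : V} {l : List V} (h : s(x,y) ∈ edgesOfList l) :
    x ∈ l ∧ y ∈ l := by
  obtain ⟨a, b, he, hab⟩ := edgesOfList_mem_iff.mp h
  have hsub := hab.subset
  rcases Sym2.eq_iff.mp he with ⟨rfl, rfl⟩ | ⟨rfl, rfl⟩
  · exact ⟨hsub (by simp), hsub (by simp)⟩
  · exact ⟨hsub (by simp), hsub (by simp)⟩

lemma edge_mem_of_pair_infix {x y : V} {l : List V} (h : [x,y] <:+: l) :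
    s(x,y) ∈ edgesOfList l := edgesOfList_mem_iff.mpr ⟨x, y, rfl, h⟩

lemma rel_of_pair_infix {R : V → V → Prop} {x y : V} {l : List V}
    (hc : l.Chain' R) (h : [x,y] <:+: l) : R x y := by
  have := hc.infix h
  simpa using this

lemma chain'_mono_mem {R S : α → α → Prop} :
    ∀ {l : List α}, l.Chain' R → (∀ x ∈ l, ∀ y ∈ l, R x y → S x y) → l.Chain' S
  | [], _, _ => List.isChain_nil
  | [_], _, _ => List.isChain_singleton _
  | x :: y :: t, hc, hm => by
      simp only [List.Chain', List.isChain_cons_cons] at hc ⊢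
      refine ⟨hm x (by simp) y (by simp) hc.1, ?_⟩
      exact chain'_mono_mem hc.2 (fun a ha b hb => hm a (by simp [ha]) b (by simp [hb]))

end MoreList

/-- `a, b, c` are consecutive on some path of `P`. -/
def ConsecP {V : Type*} (P : Finset (List V)) (a b c : V) : Prop :=
  ∃ l ∈ P, ([a,b,c] <:+: l ∨ [c,b,a] <:+: l)

lemma consecP_symm {V : Type*} {P : Finset (List V)} {a b c : V} :
    ConsecP P a b c ↔ ConsecP P c b a := by
  unfold ConsecP
  constructor <;> (rintro ⟨l, hl, h | h⟩; exacts [⟨l, hl, Or.inr h⟩, ⟨l, hl, Or.inl h⟩])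

lemma numBends_zero {V : Type*} (f : V → Point) :
    ∀ (m : List V), (∀ a b c : V, [a,b,c] <:+: m → f b ∈ openSegment ℝ (f a) (f c)) →
      numBends f m = 0
  | [], _ => rfl
  | [_], _ => rfl
  | [_,_], _ => rfl
  | a :: b :: c :: r, h => by
      rw [numBends, if_pos (h a b c ⟨[], r, rfl⟩),
        numBends_zero f (b::c::r) (fun x y z hx => h x y z (hx.trans (List.suffix_cons a _).isInfix))]

/-- Drawing an edgeless graph. -/
lemma draw_no_edges {V : Type*} [Fintype V] (G : SimpleGraph V) (P : Finset (List V))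
    (hE : ∀ x y : V, ¬ G.Adj x y) :
    ∃ f : V → Point, IsPlanarDrawing G f ∧
      ∀ a b c : V, G.Adj a b → G.Adj b c →
        (f b ∈ openSegment ℝ (f a) (f c) ↔ ConsecP P a b c) := by
  classical
  set f : V → Point := fun x => (((((Fintype.equivFin V) x : ℕ)) : ℝ), (0:ℝ)) with hf
  have hinj : Function.Injective f := by
    intro x y hxy
    have h1 := congrArg Prod.fst hxy
    simp only [hf] at h1
    have : ((Fintype.equivFin V) x : ℕ) = ((Fintype.equivFin V) y : ℕ) := by exact_mod_cast h1
    exact (Fintype.equivFin V).injective (Fin.ext this)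
  refine ⟨f, ⟨⟨hinj, ?_, ?_⟩, ?_⟩, ?_⟩
  · intro x y z h; exact absurd h (hE x y)
  · intro x y z h; exact absurd h (hE x y)
  · intro x y z w h; exact absurd h (hE x y)
  · intro a b c h; exact absurd h (hE a b)

end Infra


set_option maxHeartbeats 4000000 in
open SimpleGraph Classical in
lemma aux_draw {V : Type*} [Fintype V] :
    ∀ (N : ℕ) (G : SimpleGraph V) (P : Finset (List V)),
      G.edgeSet.ncard ≤ N → G.IsAcyclic → IsPathBasedSupport G P → IsLinear P →
      ∃ f : V → Point, IsPlanarDrawing G f ∧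
        ∀ a b c : V, G.Adj a b → G.Adj b c →
          (f b ∈ openSegment ℝ (f a) (f c) ↔ ConsecP P a b c) := by
  classical
  intro N
  induction N with
  | zero =>
      intro G P hcard hA hP hL
      refine draw_no_edges G P ?_
      intro x y hxy
      have hne : G.edgeSet.Nonempty := ⟨s(x,y), hxy⟩
      have := Set.ncard_pos (Set.toFinite _) |>.mpr hne
      omega
  | succ N ih =>
      intro G P hcard hA hP hL
      rcases Set.eq_empty_or_nonempty G.edgeSet with hEmp | hne
      · refine draw_no_edges G P ?_
        intro x y hxy
        rw [Set.eq_empty_iff_forall_notMem] at hEmp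
        exact hEmp s(x,y) (G.mem_edgeSet.mpr hxy)
      obtain ⟨a0, b0, hab⟩ : ∃ a b : V, G.Adj a b := by
        obtain ⟨e, he⟩ := hne
        induction e using Sym2.ind with
        | _ x y => exact ⟨x, y, he⟩
      obtain ⟨u₀, v₀, huv, hleaf⟩ := exists_leaf G hA hab
      have huv' : u₀ ≠ v₀ := huv.ne
      have hvu' : v₀ ≠ u₀ := huv'.symm
      set G' := G.deleteEdges {s(u₀,v₀)} with hG'
      have hG'le : G' ≤ G := by rw [hG']; exact SimpleGraph.deleteEdges_le _
      have hG'adj : ∀ x y : V, G'.Adj x y ↔ (G.Adj x y ∧ s(x,y) ≠ s(u₀,v₀)) := by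
        intro x y; rw [hG', SimpleGraph.deleteEdges_adj]; simp
      have hG'adj' : ∀ x y : V, G.Adj x y → x ≠ u₀ → y ≠ u₀ → G'.Adj x y := by
        intro x y h hx hy
        rw [hG'adj]
        refine ⟨h, fun hc => ?_⟩
        rcases Sym2.eq_iff.mp hc with ⟨h1, _⟩ | ⟨_, h2⟩
        exacts [hx h1, hy h2]
      have hu₀iso : ∀ w, ¬ G'.Adj u₀ w := by
        intro w hw
        rw [hG'adj] at hw
        exact hw.2 (by rw [hleaf w hw.1])
      have hu₀iso' : ∀ w, ¬ G'.Adj w u₀ := fun w hw => hu₀iso w hw.symm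
      have hA' : G'.IsAcyclic := by
        intro x c hc
        exact hA (c.mapLe hG'le) (hc.mapLe hG'le)
      have hcard' : G'.edgeSet.ncard ≤ N := by
        have h1 : G'.edgeSet = G.edgeSet \ {s(u₀,v₀)} := by
          rw [hG', SimpleGraph.edgeSet_deleteEdges]
        have h2 : s(u₀,v₀) ∈ G.edgeSet := huv
        have h3 := Set.ncard_diff_singleton_lt_of_mem h2 (Set.toFinite _)
        rw [h1]
        omega
      set Fu : List V → List V := fun l => l.filter (fun x => decide (x ≠ u₀)) with hFu
      have hFuNo : ∀ l, u₀ ∉ Fu l := by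
        intro l hmem
        rw [hFu] at hmem
        simp only [List.mem_filter, decide_eq_true_eq] at hmem
        exact hmem.2 rfl
      have hFuSub : ∀ l, ∀ x ∈ Fu l, x ∈ l := fun l x hx => List.mem_of_mem_filter hx
      have hFuEq : ∀ l : List V, u₀ ∉ l → Fu l = l := by
        intro l h
        rw [hFu]
        show List.filter (fun x => decide (x ≠ u₀)) l = l
        refine List.filter_eq_self.mpr (fun a ha => ?_)
        simp only [decide_eq_true_eq]
        rintro rfl; exact h ha
      have hEnd : ∀ l ∈ P, u₀ ∈ l → (l = u₀ :: Fu l) ∨ (l = Fu l ++ [u₀]) := by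
        intro l hl hmem
        obtain ⟨hch, hnd⟩ := hP.1 l hl
        rcases mem_end_or_internal hmem with ⟨t, ht⟩ | ⟨t, ht⟩ | ⟨a, b, htr⟩
        · left
          have hu : u₀ ∉ t := by rw [ht] at hnd; exact (List.nodup_cons.mp hnd).1
          have hF : Fu l = t := by rw [ht, hFu]; exact filter_of_head hu
          rw [hF, ht]
        · right
          have hu : u₀ ∉ t := by
            rw [ht, List.nodup_append] at hnd
            intro hc
            exact hnd.2.2 u₀ hc u₀ (by simp) rfl
          have hF : Fu l = t := by rw [ht, hFu]; exact filter_of_last hu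
          rw [hF, ht]
        · exfalso
          have hnd3 : ([a, u₀, b] : List V).Nodup := hnd.sublist htr.sublist
          have hab2 : a ≠ b := by simp at hnd3; tauto
          have h1 : G.Adj a u₀ := rel_of_pair_infix hch (List.IsInfix.trans (⟨[], [b], by simp⟩ : [a,u₀] <:+: [a,u₀,b]) htr)
          have h2 : G.Adj u₀ b := rel_of_pair_infix hch (List.IsInfix.trans (⟨[a], [], by simp⟩ : [u₀,b] <:+: [a,u₀,b]) htr)
          exact hab2 ((hleaf a h1.symm).trans (hleaf b h2).symm)
      set P' : Finset (List V) := P.image Fu with hP'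
      have hP'mem : ∀ l ∈ P, Fu l ∈ P' := fun l hl => Finset.mem_image_of_mem _ hl
      have hP'rep : ∀ l' ∈ P', ∃ l ∈ P, Fu l = l' := fun l' h => Finset.mem_image.mp h
      have hTransfer3 : ∀ l ∈ P, ∀ a b c : V, a ≠ u₀ → c ≠ u₀ →
          ([a,b,c] <:+: l ↔ [a,b,c] <:+: Fu l) := by
        intro l hl a b c ha hc
        by_cases hm : u₀ ∈ l
        · rcases hEnd l hl hm with h | h
          · constructor
            · intro hx; rw [h] at hx; exact infix_cons_of_ne ha hx
            · intro hx; rw [h]; exact hx.trans (List.suffix_cons u₀ (Fu l)).isInfix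
          · constructor
            · intro hx
              rw [h] at hx
              exact infix_append_singleton_of_ne (m := [a,b]) hc hx
            · intro hx; rw [h]; exact hx.trans (List.prefix_append _ _).isInfix
        · rw [hFuEq l hm]
      have hTransfer2 : ∀ l ∈ P, ∀ a b : V, a ≠ u₀ → b ≠ u₀ →
          ([a,b] <:+: l ↔ [a,b] <:+: Fu l) := by
        intro l hl a b ha hb
        by_cases hm : u₀ ∈ l
        · rcases hEnd l hl hm with h | h
          · constructor
            · intro hx; rw [h] at hx; exact infix_cons_of_ne ha hx
            · intro hx; rw [h]; exact hx.trans (List.suffix_cons u₀ (Fu l)).isInfix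
          · constructor
            · intro hx
              rw [h] at hx
              exact infix_append_singleton_of_ne (m := [a]) hb hx
            · intro hx; rw [h]; exact hx.trans (List.prefix_append _ _).isInfix
        · rw [hFuEq l hm]
      have hP'supp : IsPathBasedSupport G' P' := by
        constructor
        · rintro l' hl'
          obtain ⟨l, hl, rfl⟩ := hP'rep l' hl'
          obtain ⟨hch, hnd⟩ := hP.1 l hl
          constructor
          · have hchF : (Fu l).Chain' G.Adj := by
              by_cases hm : u₀ ∈ l
              · rcases hEnd l hl hm with h | h
                · exact hch.infix ⟨[u₀], [], by simp [← h]⟩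
                · exact hch.infix ⟨[], [u₀], by simp [← h]⟩
              · rw [hFuEq l hm]; exact hch
            apply chain'_mono_mem hchF
            intro x hx y hy hxy
            exact hG'adj' x y hxy (fun hc => hFuNo l (hc ▸ hx)) (fun hc => hFuNo l (hc ▸ hy))
          · exact hnd.filter _
        · intro e he
          have heG : e ∈ G.edgeSet := (SimpleGraph.edgeSet_mono hG'le) he
          obtain ⟨l, hl, hel⟩ := hP.2 e heG
          obtain ⟨x, y, rfl, hxy⟩ := edgesOfList_mem_iff.mp hel
          have hadj' : G'.Adj x y := he
          have hx : x ≠ u₀ := fun hc => hu₀iso y (hc ▸ hadj')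
          have hy : y ≠ u₀ := fun hc => hu₀iso' x (hc ▸ hadj')
          exact ⟨Fu l, hP'mem l hl, edge_mem_of_pair_infix ((hTransfer2 l hl x y hx hy).mp hxy)⟩
      have hL' : IsLinear P' := by
        intro l₁' h₁ l₂' h₂ hne' x y hx1 hx2 hy1 hy2
        obtain ⟨l₁, hl₁, rfl⟩ := hP'rep _ h₁
        obtain ⟨l₂, hl₂, rfl⟩ := hP'rep _ h₂
        exact hL l₁ hl₁ l₂ hl₂ (fun hc => hne' (by rw [hc])) x y
          (hFuSub _ _ hx1) (hFuSub _ _ hx2) (hFuSub _ _ hy1) (hFuSub _ _ hy2)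
      obtain ⟨f, hfPl, hfIff⟩ := ih G' P' hcard' hA' hP'supp hL'
      obtain ⟨⟨hfInj, hfProp2, hfProp3⟩, hfDisj⟩ := hfPl
      have hCons : ∀ a b c : V, a ≠ u₀ → c ≠ u₀ →
          (ConsecP P' a b c ↔ ConsecP P a b c) := by
        intro a b c ha hc
        constructor
        · rintro ⟨l', hl', h⟩
          obtain ⟨l, hl, rfl⟩ := hP'rep _ hl'
          refine ⟨l, hl, ?_⟩
          rcases h with h | h
          exacts [Or.inl ((hTransfer3 l hl a b c ha hc).mpr h),
            Or.inr ((hTransfer3 l hl c b a hc ha).mpr h)]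
        · rintro ⟨l, hl, h⟩
          refine ⟨Fu l, hP'mem l hl, ?_⟩
          rcases h with h | h
          exacts [Or.inl ((hTransfer3 l hl a b c ha hc).mp h),
            Or.inr ((hTransfer3 l hl c b a hc ha).mp h)]
      obtain ⟨l₀, hl₀P, hl₀e⟩ := hP.2 s(u₀,v₀) huv
      have hl₀nd : l₀.Nodup := (hP.1 l₀ hl₀P).2
      have hUniqueL : ∀ l ∈ P, s(u₀,v₀) ∈ edgesOfList l → l = l₀ := by
        intro l hl hel
        by_contra hne'
        obtain ⟨h1, h2⟩ := endpoints_mem hel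
        obtain ⟨h3, h4⟩ := endpoints_mem hl₀e
        exact huv' (hL l hl l₀ hl₀P hne' u₀ v₀ h1 h3 h2 h4)
      have hToL0 : ∀ (w : V) (l : List V), l ∈ P →
          ([w,v₀,u₀] <:+: l ∨ [u₀,v₀,w] <:+: l) → l = l₀ := by
        intro w l hl h
        apply hUniqueL l hl
        rcases h with h | h
        · have : s(v₀,u₀) ∈ edgesOfList l := edge_mem_of_pair_infix
            (List.IsInfix.trans (⟨[w], [], by simp⟩ : [v₀,u₀] <:+: [w,v₀,u₀]) h)
          rwa [Sym2.eq_swap] at this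
        · exact edge_mem_of_pair_infix (List.IsInfix.trans (⟨[], [w], by simp⟩ : [u₀,v₀] <:+: [u₀,v₀,w]) h)
      have hConsecUniq : ∀ w w' : V, ConsecP P w v₀ u₀ → ConsecP P w' v₀ u₀ → w = w' := by
        intro w w' hw hw'
        obtain ⟨l, hl, h⟩ := hw
        obtain ⟨l', hl', h'⟩ := hw'
        have e1 : l = l₀ := hToL0 w l hl h
        have e2 : l' = l₀ := hToL0 w' l' hl' h'
        subst e1; subst e2
        rcases h with h | h <;> rcases h' with h' | h'
        · exact (infix_triple_unique hl₀nd h h').1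
        · exfalso
          have hx := (infix_triple_unique hl₀nd h h').1
          have hnd3 : ([w,v₀,u₀] : List V).Nodup := hl₀nd.sublist h.sublist
          simp at hnd3
          tauto
        · exfalso
          have hx := (infix_triple_unique hl₀nd h h').1
          have hnd3 : ([w',v₀,u₀] : List V).Nodup := hl₀nd.sublist h'.sublist
          simp at hnd3
          tauto
        · exact (infix_triple_unique hl₀nd h h').2
      -- the direction d
      obtain ⟨d, hd0, hNoPos, hNegCons, hConsNeg⟩ :
          ∃ d : Point, d ≠ 0 ∧
            (∀ w, G'.Adj v₀ w → ∀ s : ℝ, 0 < s → f w - f v₀ ≠ s • d) ∧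
            (∀ w, G'.Adj v₀ w → ∀ s : ℝ, 0 < s → f w - f v₀ = -s • d → ConsecP P w v₀ u₀) ∧
            (∀ w, ConsecP P w v₀ u₀ → G'.Adj v₀ w ∧ ∃ s : ℝ, 0 < s ∧ f w - f v₀ = -s • d) := by
        by_cases hprev : ∃ w, ConsecP P w v₀ u₀
        · obtain ⟨pv, hpv0⟩ := hprev
          obtain ⟨l₁, hl₁, hpat0⟩ := hpv0
          have hl₁0 : l₁ = l₀ := hToL0 pv l₁ hl₁ hpat0
          rw [hl₁0] at hpat0
          have hpat := hpat0
          have hpv : ConsecP P pv v₀ u₀ := ⟨l₀, hl₀P, hpat⟩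
          have hpvu : pv ≠ u₀ ∧ pv ≠ v₀ ∧ G.Adj v₀ pv := by
            rcases hpat with h | h
            · have hnd3 : ([pv,v₀,u₀] : List V).Nodup := hl₀nd.sublist h.sublist
              have hadj : G.Adj pv v₀ := rel_of_pair_infix (hP.1 l₀ hl₀P).1
                (List.IsInfix.trans (⟨[], [u₀], by simp⟩ : [pv,v₀] <:+: [pv,v₀,u₀]) h)
              simp only [List.nodup_cons, List.mem_cons] at hnd3
              exact ⟨fun hc => hnd3.1 (by simp [hc]), fun hc => hnd3.1 (by simp [hc]), hadj.symm⟩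
            · have hnd3 : ([u₀,v₀,pv] : List V).Nodup := hl₀nd.sublist h.sublist
              have hadj : G.Adj v₀ pv := rel_of_pair_infix (hP.1 l₀ hl₀P).1
                (List.IsInfix.trans (⟨[u₀], [], by simp⟩ : [v₀,pv] <:+: [u₀,v₀,pv]) h)
              simp only [List.nodup_cons, List.mem_cons] at hnd3
              refine ⟨fun hc => hnd3.1 (by simp [hc]), fun hc => hnd3.2.1 (by simp [hc]), hadj⟩
          obtain ⟨hpvu1, hpvu2, hpvadj⟩ := hpvu
          have hpvG' : G'.Adj v₀ pv := hG'adj' v₀ pv hpvadj hvu' hpvu1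
          have hfpv : f pv ≠ f v₀ := fun hc => hpvu2 (hfInj hc)
          have hNotConsecPvW : ∀ w, w ≠ u₀ → ¬ ConsecP P pv v₀ w := by
            intro w hwu hcon
            obtain ⟨l, hl, hpat'⟩ := hcon
            have hl0 : l = l₀ := by
              by_contra hne'
              have e1 : s(pv,v₀) ∈ edgesOfList l := by
                rcases hpat' with h' | h'
                · exact edge_mem_of_pair_infix
                    (List.IsInfix.trans (⟨[], [w], by simp⟩ : [pv,v₀] <:+: [pv,v₀,w]) h')
                · have := edge_mem_of_pair_infix
                    (List.IsInfix.trans (⟨[w], [], by simp⟩ : [v₀,pv] <:+: [w,v₀,pv]) h')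
                  rwa [Sym2.eq_swap] at this
              have e2 : s(pv,v₀) ∈ edgesOfList l₀ := by
                rcases hpat with h | h
                · exact edge_mem_of_pair_infix
                    (List.IsInfix.trans (⟨[], [u₀], by simp⟩ : [pv,v₀] <:+: [pv,v₀,u₀]) h)
                · have := edge_mem_of_pair_infix
                    (List.IsInfix.trans (⟨[u₀], [], by simp⟩ : [v₀,pv] <:+: [u₀,v₀,pv]) h)
                  rwa [Sym2.eq_swap] at this
              obtain ⟨m1, m2⟩ := endpoints_mem e1
              obtain ⟨m3, m4⟩ := endpoints_mem e2
              exact hpvu2 (hL l hl l₀ hl₀P hne' pv v₀ m1 m3 m2 m4)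
            rw [hl0] at hpat'
            rcases hpat with h | h <;> rcases hpat' with h' | h'
            · exact hwu (infix_triple_unique hl₀nd h h').2.symm
            · exact hpvu1 (infix_triple_unique hl₀nd h' h).2
            · exact hpvu1 (infix_triple_unique hl₀nd h h').1.symm
            · exact hwu (infix_triple_unique hl₀nd h' h).1
          refine ⟨f v₀ - f pv, sub_ne_zero.mpr (fun hc => hpvu2 (hfInj hc).symm), ?_, ?_, ?_⟩
          · intro w hw s hs heq
            have hwu : w ≠ u₀ := fun hc => hu₀iso' v₀ (hc ▸ hw)
            have hopen : f v₀ ∈ openSegment ℝ (f pv) (f w) := by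
              have hmo := mid_open_seg (a := f pv) (p := f v₀) hfpv hs
              rw [show f v₀ + s • (f v₀ - f pv) = f w from by rw [← heq]; abel] at hmo
              exact hmo
            have hcons := (hfIff pv v₀ w hpvG'.symm hw).mp hopen
            exact hNotConsecPvW w hwu ((hCons pv v₀ w hpvu1 hwu).mp hcons)
          · intro w hw s hs heq
            by_cases hwpv : w = pv
            · subst hwpv; exact hpv
            · exfalso
              have heq' : f w - f v₀ = s • (f pv - f v₀) := by
                rw [heq, neg_smul, ← smul_neg, neg_sub]
              obtain ⟨x, hx1, hx2, hx3⟩ := ray_overlap hfpv hs heq'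
              have hIP := hfProp2 pv v₀ w hpvG'.symm hw (fun hc => hwpv hc.symm)
              apply hx3
              have hxx : x ∈ segment ℝ (f pv) (f v₀) ∩ segment ℝ (f v₀) (f w) :=
                ⟨by rwa [segment_symm] at hx1, hx2⟩
              rw [hIP] at hxx
              exact hxx
          · intro w hcw
            have hwpv : w = pv := hConsecUniq w pv hcw hpv
            subst hwpv
            exact ⟨hpvG', 1, one_pos, by rw [neg_smul, one_smul, neg_sub]⟩
        · have h0mem : (0 : Point) ∉
              (Finset.univ.filter (G'.Adj v₀)).image (fun w => f w - f v₀) := by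
            intro hc
            obtain ⟨w, hw, hw0⟩ := Finset.mem_image.mp hc
            have hwv : w ≠ v₀ := ((Finset.mem_filter.mp hw).2).ne'
            exact hwv (hfInj (by rwa [sub_eq_zero] at hw0))
          obtain ⟨d, hd0, hdf⟩ := exists_free_dir _ h0mem
          refine ⟨d, hd0, ?_, ?_, ?_⟩
          · intro w hw s _ heq
            exact hdf _ (Finset.mem_image_of_mem _ (by simp [hw])) s heq
          · intro w hw s _ heq
            exact absurd (by rwa [neg_smul, ← neg_smul] at heq)
              (hdf _ (Finset.mem_image_of_mem _ (by simp [hw])) (-s))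
          · intro w hcw
            exact absurd ⟨w, hcw⟩ hprev
      -- the distance δ
      obtain ⟨δ, hδpos, hδseg, hδpt⟩ :
          ∃ δ : ℝ, 0 < δ ∧
            (∀ x y : V, G'.Adj x y → x ≠ v₀ → y ≠ v₀ →
              ∀ z ∈ segment ℝ (f x) (f y), δ ≤ dist (f v₀) z) ∧
            (∀ x : V, x ≠ v₀ → δ ≤ dist (f v₀) (f x)) := by
        classical
        let SP : Finset (V × V) := (Finset.univ ×ˢ Finset.univ).filter
          (fun p => G'.Adj p.1 p.2 ∧ p.1 ≠ v₀ ∧ p.2 ≠ v₀)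
        let SD : Finset ℝ := insert 1
          ((SP.image (fun p => Metric.infDist (f v₀) (segment ℝ (f p.1) (f p.2)))) ∪
           ((Finset.univ.filter (fun x : V => x ≠ v₀)).image (fun x => dist (f v₀) (f x))))
        have hSDne : SD.Nonempty := ⟨1, Finset.mem_insert_self _ _⟩
        refine ⟨SD.min' hSDne, ?_, ?_, ?_⟩
        · have hδmem := SD.min'_mem hSDne
          rcases Finset.mem_insert.mp hδmem with h | h
          · rw [h]; norm_num
          rcases Finset.mem_union.mp h with h | h
          · obtain ⟨pq, hpq, hval⟩ := Finset.mem_image.mp h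
            rw [← hval]
            have hadj := (Finset.mem_filter.mp hpq).2
            have hnm : f v₀ ∉ segment ℝ (f pq.1) (f pq.2) :=
              hfProp3 pq.1 pq.2 v₀ hadj.1 hadj.2.1.symm hadj.2.2.symm
            exact ((isClosed_seg _ _).notMem_iff_infDist_pos
              ⟨_, left_mem_segment ℝ _ _⟩).mp hnm
          · obtain ⟨x, hx, hval⟩ := Finset.mem_image.mp h
            rw [← hval]
            exact dist_pos.mpr (fun hc => (Finset.mem_filter.mp hx).2 (hfInj hc.symm))
        · intro x y hxy hx hy z hz
          have h1 : Metric.infDist (f v₀) (segment ℝ (f x) (f y)) ∈ SD := by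
            apply Finset.mem_insert_of_mem
            apply Finset.mem_union_left
            exact Finset.mem_image.mpr ⟨(x,y), Finset.mem_filter.mpr ⟨by simp, hxy, hx, hy⟩, rfl⟩
          exact le_trans (SD.min'_le _ h1) (Metric.infDist_le_dist_of_mem hz)
        · intro x hx
          apply SD.min'_le
          apply Finset.mem_insert_of_mem
          apply Finset.mem_union_right
          exact Finset.mem_image.mpr ⟨x, by simp [hx], rfl⟩
      set ε := δ / (2 * (‖d‖ + 1)) with hεdef
      have hεpos : 0 < ε := by
        rw [hεdef]; positivity
      set q : Point := f v₀ + ε • d with hq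
      have hqv : dist (f v₀) q = ε * ‖d‖ := by
        rw [hq, _root_.dist_comm, dist_self_add_left, norm_smul, Real.norm_eq_abs, abs_of_pos hεpos]
      have hεd : ε * ‖d‖ < δ := by
        rw [hεdef, div_mul_eq_mul_div, div_lt_iff₀ (by positivity)]
        nlinarith [norm_nonneg d, hδpos]
      have hqfv : q ≠ f v₀ := by
        rw [hq]
        intro hc
        have h1 : ε • d = 0 := by
          have := congrArg (fun z => z - f v₀) hc
          simpa using this
        rcases smul_eq_zero.mp h1 with h | h
        · exact (ne_of_gt hεpos) h
        · exact hd0 h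
      have hnear : ∀ z ∈ segment ℝ (f v₀) q, dist (f v₀) z < δ := by
        intro z hz
        calc dist (f v₀) z ≤ dist (f v₀) q := dist_le_of_seg hz
          _ = ε * ‖d‖ := hqv
          _ < δ := hεd
      set g : V → Point := fun x => if x = u₀ then q else f x with hg
      have hgu : g u₀ = q := by rw [hg]; simp
      have hgne : ∀ x, x ≠ u₀ → g x = f x := by intro x hx; rw [hg]; simp [hx]
      have hgv : g v₀ = f v₀ := hgne v₀ hvu'
      have hqnotf : ∀ x, x ≠ u₀ → q ≠ f x := by
        intro x hx hc
        by_cases hxv : x = v₀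
        · subst hxv; exact hqfv hc
        · have h1 := hδpt x hxv
          rw [← hc, hqv] at h1
          linarith
      have hgInj : Function.Injective g := by
        intro x y hxy
        by_cases hx : x = u₀ <;> by_cases hy : y = u₀
        · rw [hx, hy]
        · subst hx; rw [hgu, hgne y hy] at hxy; exact absurd hxy (hqnotf y hy)
        · subst hy; rw [hgu, hgne x hx] at hxy; exact absurd hxy.symm (hqnotf x hx)
        · rw [hgne x hx, hgne y hy] at hxy; exact hfInj hxy
      have hNewOld : ∀ w, G'.Adj v₀ w →
          segment ℝ (f v₀) q ∩ segment ℝ (f v₀) (f w) = {f v₀} := by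
        intro w hw
        apply ray_inter hqfv
        intro s hs heq
        have hqd : q - f v₀ = ε • d := by rw [hq]; abel
        rw [hqd, smul_smul] at heq
        exact hNoPos w hw (s * ε) (by positivity) heq
      have hqNotOnEdge : ∀ x y : V, G.Adj x y → x ≠ u₀ → y ≠ u₀ →
          q ∉ segment ℝ (f x) (f y) := by
        intro x y hxy hx hy hmem
        by_cases hxv : x = v₀
        · rw [hxv] at hmem hxy
          have hG'xy : G'.Adj v₀ y := hG'adj' _ _ hxy hvu' hy
          have hqq : q ∈ segment ℝ (f v₀) q ∩ segment ℝ (f v₀) (f y) :=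
            ⟨right_mem_segment ℝ _ _, hmem⟩
          rw [hNewOld y hG'xy] at hqq
          exact hqfv hqq
        by_cases hyv : y = v₀
        · rw [hyv] at hmem hxy
          have hG'xy : G'.Adj v₀ x := (hG'adj' _ _ hxy hx hvu').symm
          rw [segment_symm] at hmem
          have hqq : q ∈ segment ℝ (f v₀) q ∩ segment ℝ (f v₀) (f x) :=
            ⟨right_mem_segment ℝ _ _, hmem⟩
          rw [hNewOld x hG'xy] at hqq
          exact hqfv hqq
        · have hG'xy := hG'adj' _ _ hxy hx hy
          have h1 := hδseg x y hG'xy hxv hyv q hmem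
          rw [hqv] at h1
          linarith
      have hvNotOnNew : ∀ x, x ≠ u₀ → x ≠ v₀ → f x ∉ segment ℝ (f v₀) q := by
        intro x hxu hxv hmem
        have h1 := hδpt x hxv
        have h2 := hnear _ hmem
        linarith
      have hNbr : ∀ w, G.Adj u₀ w → w = v₀ := hleaf
      have hNbr' : ∀ w, G.Adj w u₀ → w = v₀ := fun w h => hleaf w h.symm
      have hKey : ∀ w, G.Adj v₀ w → w ≠ u₀ →
          (f v₀ ∈ openSegment ℝ (f w) q ↔ ConsecP P w v₀ u₀) := by
        intro w hw hwu
        have hG'w : G'.Adj v₀ w := hG'adj' _ _ hw hvu' hwu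
        constructor
        · intro hmem
          rw [hq] at hmem
          obtain ⟨c, hc, hceq⟩ := open_mid_ray hεpos hmem
          exact hNegCons w hG'w c hc hceq
        · intro hcon
          obtain ⟨hG'w2, s, hs, heq⟩ := hConsNeg w hcon
          have hwv : f w ≠ f v₀ := fun hc => hG'w.ne' (hfInj hc)
          have hmo := mid_open_seg (a := f w) (p := f v₀) hwv (div_pos hεpos hs)
          have h3 : f v₀ - f w = s • d := by
            rw [← neg_sub (f w) (f v₀), heq, neg_smul, neg_neg]
          rw [show f v₀ + (ε/s) • (f v₀ - f w) = q from by
            rw [h3, smul_smul, div_mul_cancel₀ _ (ne_of_gt hs), hq]] at hmo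
          exact hmo
      refine ⟨g, ⟨⟨hgInj, ?_, ?_⟩, ?_⟩, ?_⟩
      · -- properness (ii)
        intro x y z hxy hyz hxz
        by_cases hyu : y = u₀
        · exfalso
          rw [hyu] at hxy hyz
          exact hxz ((hNbr' x hxy).trans (hNbr z hyz).symm)
        by_cases hxu : x = u₀
        · rw [hxu] at hxy hxz ⊢
          have hyv : y = v₀ := hNbr y hxy
          rw [hyv] at hyz ⊢
          have hzu : z ≠ u₀ := Ne.symm hxz
          have hG'z : G'.Adj v₀ z := hG'adj' _ _ hyz hvu' hzu
          rw [hgu, hgv, hgne z hzu, segment_symm]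
          exact hNewOld z hG'z
        by_cases hzu : z = u₀
        · rw [hzu] at hyz hxz ⊢
          have hyv : y = v₀ := hNbr' y hyz
          rw [hyv] at hxy ⊢
          have hG'x : G'.Adj v₀ x := (hG'adj' _ _ hxy hxu hvu').symm
          rw [hgu, hgv, hgne x hxu]
          have h1 := hNewOld x hG'x
          rw [Set.inter_comm] at h1
          rw [segment_symm]
          exact h1
        · rw [hgne x hxu, hgne y hyu, hgne z hzu]
          exact hfProp2 x y z (hG'adj' _ _ hxy hxu hyu) (hG'adj' _ _ hyz hyu hzu) hxz
      · -- properness (iii)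
        intro x y z hxy hzx hzy
        by_cases hxu : x = u₀
        · rw [hxu] at hxy hzx ⊢
          have hyv : y = v₀ := hNbr y hxy
          rw [hyv] at hzy ⊢
          rw [hgu, hgv, hgne z hzx, segment_symm]
          exact hvNotOnNew z hzx hzy
        by_cases hyu : y = u₀
        · rw [hyu] at hxy hzy ⊢
          have hxv : x = v₀ := hNbr' x hxy
          rw [hxv] at hzx ⊢
          rw [hgu, hgv, hgne z hzy]
          exact hvNotOnNew z hzy hzx
        by_cases hzu : z = u₀
        · rw [hzu]
          rw [hgu, hgne x hxu, hgne y hyu]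
          exact hqNotOnEdge x y hxy hxu hyu
        · rw [hgne x hxu, hgne y hyu, hgne z hzu]
          exact hfProp3 x y z (hG'adj' _ _ hxy hxu hyu) hzx hzy
      · -- planarity
        intro x y z w hxy hzw hxz hxw hyz hyw
        apply Set.eq_empty_iff_forall_notMem.mpr
        rintro pt ⟨h1, h2⟩
        by_cases hxu : x = u₀
        · rw [hxu] at hxy hxz hxw h1
          have hyv : y = v₀ := hNbr y hxy
          rw [hyv] at hyz hyw h1
          have hzu : z ≠ u₀ := Ne.symm hxz
          have hwu : w ≠ u₀ := Ne.symm hxw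
          have hzv : z ≠ v₀ := Ne.symm hyz
          have hwv : w ≠ v₀ := Ne.symm hyw
          rw [hgu, hgv] at h1
          rw [hgne z hzu, hgne w hwu] at h2
          have hd1 := hδseg z w (hG'adj' _ _ hzw hzu hwu) hzv hwv pt h2
          have hd2 := hnear pt (by rwa [segment_symm] at h1)
          linarith
        by_cases hyu : y = u₀
        · rw [hyu] at hxy hyz hyw h1
          have hxv : x = v₀ := hNbr' x hxy
          rw [hxv] at hxz hxw h1
          have hzu : z ≠ u₀ := Ne.symm hyz
          have hwu : w ≠ u₀ := Ne.symm hyw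
          have hzv : z ≠ v₀ := Ne.symm hxz
          have hwv : w ≠ v₀ := Ne.symm hxw
          rw [hgv, hgu] at h1
          rw [hgne z hzu, hgne w hwu] at h2
          have hd1 := hδseg z w (hG'adj' _ _ hzw hzu hwu) hzv hwv pt h2
          have hd2 := hnear pt h1
          linarith
        by_cases hzu : z = u₀
        · rw [hzu] at hzw hxz hyz h2
          have hwv : w = v₀ := hNbr w hzw
          rw [hwv] at hxw hyw h2
          rw [hgu, hgv] at h2
          rw [hgne x hxu, hgne y hyu] at h1
          have hd1 := hδseg x y (hG'adj' _ _ hxy hxu hyu) hxw hyw pt h1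
          have hd2 := hnear pt (by rwa [segment_symm] at h2)
          linarith
        by_cases hwu : w = u₀
        · rw [hwu] at hzw hxw hyw h2
          have hzv : z = v₀ := hNbr' z hzw
          rw [hzv] at hxz hyz h2
          rw [hgv, hgu] at h2
          rw [hgne x hxu, hgne y hyu] at h1
          have hd1 := hδseg x y (hG'adj' _ _ hxy hxu hyu) hxz hyz pt h1
          have hd2 := hnear pt h2
          linarith
        · rw [hgne x hxu, hgne y hyu] at h1
          rw [hgne z hzu, hgne w hwu] at h2
          have hdj := hfDisj x y z w (hG'adj' _ _ hxy hxu hyu) (hG'adj' _ _ hzw hzu hwu)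
            hxz hxw hyz hyw
          rw [Set.eq_empty_iff_forall_notMem] at hdj
          exact hdj pt ⟨h1, h2⟩
      · -- the alignment iff
        intro a b c hab hbc
        by_cases hac : a = c
        · rw [hac] at hab
          constructor
          · intro hmem
            rw [hac, openSegment_same] at hmem
            exact absurd (hgInj hmem) hab.ne'
          · rintro ⟨l, hl, h | h⟩ <;>
            · rw [hac] at h
              have hnd3 : ([c,b,c] : List V).Nodup := (hP.1 l hl).2.sublist h.sublist
              simp at hnd3
        by_cases hbu : b = u₀
        · rw [hbu] at hab hbc
          exact absurd ((hNbr' a hab).trans (hNbr c hbc).symm) hac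
        by_cases hau : a = u₀
        · rw [hau] at hab hac ⊢
          have hbv : b = v₀ := hNbr b hab
          rw [hbv] at hbc ⊢
          have hcu : c ≠ u₀ := Ne.symm hac
          rw [hgu, hgv, hgne c hcu, openSegment_symm]
          exact (hKey c hbc hcu).trans consecP_symm
        by_cases hcu : c = u₀
        · rw [hcu] at hbc ⊢
          have hbv : b = v₀ := hNbr' b hbc
          rw [hbv] at hab ⊢
          rw [hgne a hau, hgv, hgu]
          exact hKey a hab.symm hau
        · rw [hgne a hau, hgne b hbu, hgne c hcu]
          exact (hfIff a b c (hG'adj' _ _ hab hau hbu) (hG'adj' _ _ hbc hbu hcu)).trans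
            (hCons a b c hau hcu)

/-- Every linear path-based tree support admits a planar
straight-line drawing in which every path has 0 bends. -/
theorem stmt12 {V : Type*} [Fintype V] (G : SimpleGraph V) (P : Finset (List V))
    (hT : G.IsTree) (hP : IsPathBasedSupport G P) (hL : IsLinear P) :
    ∃ f : V → Point, IsPlanarDrawing G f ∧ ∀ l ∈ P, numBends f l = 0 := by
  classical
  obtain ⟨f, hpl, hiff⟩ := aux_draw (G.edgeSet.ncard) G P le_rfl hT.2 hP hL
  refine ⟨f, hpl, ?_⟩
  intro l hl
  apply numBends_zero
  intro a b c habc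
  have hch := (hP.1 l hl).1
  have h1 : G.Adj a b := rel_of_pair_infix hch
    (List.IsInfix.trans (⟨[], [c], by simp⟩ : [a,b] <:+: [a,b,c]) habc)
  have h2 : G.Adj b c := rel_of_pair_infix hch
    (List.IsInfix.trans (⟨[a], [], by simp⟩ : [b,c] <:+: [a,b,c]) habc)
  exact (hiff a b c h1 h2).mpr ⟨l, hl, Or.inl habc⟩
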